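/- In the free abelian group of monomials in variables Y_{i,s} (i in a finite index set I, s an integer), the product of two right-negative monomials is right-negative. Here a monomial m = ∏ Y_{i,s}^{u_{i,s}} (finitely many u_{i,s} nonzero) is right-negative if for every pair (i,s) with u_{i,s} ≠ 0 such that u_{j,t} = 0 for all j ∈ I and all t > s, one has u_{i,s} < 0. -/

import Mathlib

/-!
If `u + v` vanishes above `s`, so do `u` and `v`: otherwise take the largest `t > s` at which
`u` is nonzero. There `u` is negative by right-negativity, `v = -u` is positive, and `v`
vanishes above `t` (since both `u + v` and `u` do), contradicting right-negativity of `v`.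
Hence `u (i, s)` and `v (i, s)` are both `≤ 0` at a top position `(i, s)` of `u + v`.
-/

/-- A monomial (finitely supported exponent function) is right-negative if for every
pair `(i,s)` with nonzero exponent such that all exponents at spectral parameters `t > s`
vanish, the exponent at `(i,s)` is strictly negative. -/
def RightNegative {I : Type*} (u : (I × ℤ) →₀ ℤ) : Prop :=
  ∀ (i : I) (s : ℤ), u (i, s) ≠ 0 → (∀ (j : I) (t : ℤ), s < t → u (j, t) = 0) →
    u (i, s) < 0

def VanishesAbove {I M : Type*} [Zero M] (u : (I × ℤ) →₀ M) (s : ℤ) : Prop :=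
  ∀ (j : I) (t : ℤ), s < t → u (j, t) = 0

theorem exists_top_of_not_vanishesAbove {I M : Type*} [Zero M] {u : (I × ℤ) →₀ M} {s : ℤ}
    (h : ¬ VanishesAbove u s) : ∃ j t, s < t ∧ u (j, t) ≠ 0 ∧ VanishesAbove u t := by
  classical
  have hS : (u.support.filter (s < ·.2)).Nonempty := by
    simp only [VanishesAbove, not_forall] at h
    obtain ⟨j, t, hst, hne⟩ := h
    exact ⟨(j, t), by simpa using ⟨hne, hst⟩⟩
  obtain ⟨⟨j, t⟩, hjt, htop⟩ := (u.support.filter (s < ·.2)).exists_max_image Prod.snd hS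
  rw [Finset.mem_filter, Finsupp.mem_support_iff] at hjt
  refine ⟨j, t, hjt.2, hjt.1, fun k r hr => ?_⟩
  by_contra hkr
  have hle : r ≤ t := htop (k, r) (by simpa using ⟨hkr, hjt.2.trans hr⟩)
  exact hle.not_gt hr

theorem RightNegative.apply_nonpos {I : Type*} {u : (I × ℤ) →₀ ℤ} (hu : RightNegative u)
    {s : ℤ} (h : VanishesAbove u s) (i : I) : u (i, s) ≤ 0 := by
  by_cases hz : u (i, s) = 0
  · exact hz.le
  · exact (hu i s hz h).le

theorem RightNegative.vanishesAbove_of_add {I : Type*} {u v : (I × ℤ) →₀ ℤ}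
    (hu : RightNegative u) (hv : RightNegative v) {s : ℤ} (h : VanishesAbove (u + v) s) :
    VanishesAbove u s := by
  by_contra hus
  obtain ⟨j, t, hst, hne, hut⟩ := exists_top_of_not_vanishesAbove hus
  have hsum : u (j, t) + v (j, t) = 0 := h j t hst
  have hvt : VanishesAbove v t := fun k r hr => by
    have hkr : u (k, r) + v (k, r) = 0 := h k r (hst.trans hr)
    rw [hut k r hr, zero_add] at hkr
    exact hkr
  have hneg := hu j t hne hut
  have hnonpos := hv.apply_nonpos hvt j
  omega

theorem product_of_rightNegative_is_rightNegative_general {I : Type*}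
    (u v : (I × ℤ) →₀ ℤ) (hu : RightNegative u) (hv : RightNegative v) :
    RightNegative (u + v) := by
  intro i s hne h
  have huv : VanishesAbove (u + v) s := h
  have hu_le := hu.apply_nonpos (hu.vanishesAbove_of_add hv huv) i
  have hv_le := hv.apply_nonpos (hv.vanishesAbove_of_add hu (add_comm u v ▸ huv)) i
  rw [Finsupp.add_apply] at hne ⊢
  omega

/-- The product (written additively on exponents) of two right-negative monomials is
right-negative. -/
theorem product_of_rightNegative_is_rightNegative {I : Type*} [Fintype I]
    (u v : (I × ℤ) →₀ ℤ) (hu : RightNegative u) (hv : RightNegative v) :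
    RightNegative (u + v) :=
  product_of_rightNegative_is_rightNegative_general u v hu hv
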